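/- Let A = (A1 A2) ∈ ℝ^{m×n}, τ > 0, and let (X̂1(W) X̂2(W)) be a minimizer of ‖((A1 A2) − (X1 X2)) ⊙ (W1 W2)‖_F² + τ·rank(X1 X2) over all (X1 X2). Then ‖(A1 − X̂1(W)) ⊙ W1‖_F² + ‖(A2 − X̂2(W)) ⊙ W2‖_F² ≤ ‖A2 ⊙ W2‖_F² + τ·rank(A1); in particular, for every i, j, |(A1)_{ij} − (X̂1(W))_{ij}|² ≤ (‖A2 ⊙ W2‖_F² + τ·rank(A1)) / (W1)_{ij}², so that X̂1(W) → A1 as (W1)_{ij} → ∞ with W2 bounded. -/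

import Mathlib

/-! The minimizer does at least as well as the competitor `(A1 0)`, whose cost is
`‖A2 ⊙ W2‖_F² + τ·rank A1`; a single entry of `(A1 − X̂1) ⊙ W1` is bounded by the whole
weighted residual. -/

open Matrix Filter Topology

noncomputable def frob {α β : Type*} [Fintype α] [Fintype β] (M : Matrix α β ℝ) : ℝ :=
  Real.sqrt (∑ i, ∑ j, (M i j) ^ 2)

noncomputable def projCol {m k : ℕ} (B : Matrix (Fin m) (Fin k) ℝ) :
    Matrix (Fin m) (Fin m) ℝ :=
  B * (Bᵀ * B)⁻¹ * Bᵀ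

section Frobenius

variable {α β : Type*} [Fintype α] [Fintype β]

lemma frob_sq (M : Matrix α β ℝ) : frob M ^ 2 = ∑ i, ∑ j, M i j ^ 2 :=
  Real.sq_sqrt (by positivity)

@[simp]
lemma frob_zero : frob (0 : Matrix α β ℝ) = 0 := by
  simp [frob]

lemma sq_apply_le_frob_sq (M : Matrix α β ℝ) (i : α) (j : β) : M i j ^ 2 ≤ frob M ^ 2 := by
  rw [frob_sq]
  calc M i j ^ 2 ≤ ∑ j', M i j' ^ 2 :=
        Finset.single_le_sum (fun _ _ => sq_nonneg _) (Finset.mem_univ j)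
    _ ≤ ∑ i', ∑ j', M i' j' ^ 2 :=
        Finset.single_le_sum (f := fun i' => ∑ j', M i' j' ^ 2)
          (fun _ _ => by positivity) (Finset.mem_univ i)

end Frobenius

lemma Matrix.rank_fromCols_zero_le {R m n l : Type*} [CommRing R] [StrongRankCondition R]
    [Fintype n] [Fintype l] [DecidableEq n] (A : Matrix m n R) : (fromCols A (0 : Matrix m l R)).rank ≤ A.rank := by
  have hfac : fromCols A (0 : Matrix m l R) = A * fromCols (1 : Matrix n n R) 0 := by
    rw [mul_fromCols, Matrix.mul_one, Matrix.mul_zero]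
  rw [hfac]
  exact rank_mul_le_left _ _

/-- For a minimizer `(X̂1(W) X̂2(W))` of the rank-penalized weighted problem,
`‖(A1 − X̂1(W)) ⊙ W1‖_F² + ‖(A2 − X̂2(W)) ⊙ W2‖_F² ≤ ‖A2 ⊙ W2‖_F² + τ·rank A1`; in
particular `|(A1)_{ij} − (X̂1(W))_{ij}|² ≤ (‖A2 ⊙ W2‖_F² + τ·rank A1)/(W1)_{ij}²` for all
`i, j` (so that `X̂1(W) → A1` as `(W1)_{ij} → ∞` with `W2` bounded). -/
theorem stmt_10 {m k l : ℕ}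
    (A1 : Matrix (Fin m) (Fin k) ℝ) (A2 : Matrix (Fin m) (Fin l) ℝ)
    (τ : ℝ) (hτ : 0 < τ)
    (W1 : Matrix (Fin m) (Fin k) ℝ) (W2 : Matrix (Fin m) (Fin l) ℝ)
    (hW1 : ∀ i j, 0 < W1 i j)
    (X1 : Matrix (Fin m) (Fin k) ℝ) (X2 : Matrix (Fin m) (Fin l) ℝ)
    (hmin : ∀ (Y1 : Matrix (Fin m) (Fin k) ℝ) (Y2 : Matrix (Fin m) (Fin l) ℝ),
      frob (Matrix.hadamard (A1 - X1) W1) ^ 2 + frob (Matrix.hadamard (A2 - X2) W2) ^ 2 +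
          τ * ((Matrix.fromCols X1 X2).rank : ℝ) ≤
        frob (Matrix.hadamard (A1 - Y1) W1) ^ 2 + frob (Matrix.hadamard (A2 - Y2) W2) ^ 2 +
          τ * ((Matrix.fromCols Y1 Y2).rank : ℝ)) :
    (frob (Matrix.hadamard (A1 - X1) W1) ^ 2 + frob (Matrix.hadamard (A2 - X2) W2) ^ 2 ≤
      frob (Matrix.hadamard A2 W2) ^ 2 + τ * (A1.rank : ℝ)) ∧
    ∀ i j, (A1 i j - X1 i j) ^ 2 ≤
      (frob (Matrix.hadamard A2 W2) ^ 2 + τ * (A1.rank : ℝ)) / (W1 i j) ^ 2 := by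
  have hcompare := hmin A1 0
  simp only [sub_self, zero_hadamard, frob_zero, zero_pow two_ne_zero, zero_add, sub_zero]
    at hcompare
  have hrank : τ * ((fromCols A1 (0 : Matrix (Fin m) (Fin l) ℝ)).rank : ℝ) ≤ τ * A1.rank :=
    mul_le_mul_of_nonneg_left (Nat.cast_le.mpr A1.rank_fromCols_zero_le) hτ.le
  have hpenalty : 0 ≤ τ * ((fromCols X1 X2).rank : ℝ) := by positivity
  have hresidual : frob ((A1 - X1) ⊙ W1) ^ 2 + frob ((A2 - X2) ⊙ W2) ^ 2 ≤
      frob (A2 ⊙ W2) ^ 2 + τ * A1.rank := by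
    linarith
  refine ⟨hresidual, fun i j => ?_⟩
  rw [le_div_iff₀ (pow_pos (hW1 i j) 2), ← mul_pow]
  have hentry : ((A1 i j - X1 i j) * W1 i j) ^ 2 ≤ frob ((A1 - X1) ⊙ W1) ^ 2 :=
    sq_apply_le_frob_sq ((A1 - X1) ⊙ W1) i j
  have hW2 := sq_nonneg (frob ((A2 - X2) ⊙ W2))
  linarith
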